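/- If T = Toeplitz(T₀, T₁, ..., T_N) is a positive definite Hermitian d(N+1)×d(N+1) block Toeplitz matrix, then there exist vectors u_k ∈ ℂ^d, angles ω_k ∈ [−π,π), and positive scalars λ_k, for k = 1, ..., d(N+1), such that T_j = Σ_k λ_k u_k u_k* e^{ijω_k} for j = 0, 1, ..., N. -/

import Mathlib

/-!
Write `M = Toeplitz(T₀, …, T_N)` as the Gram matrix of vectors `x (p, a)`. The Toeplitz
structure says the Gram matrix of the blocks `1, …, N` equals that of the blocks `0, …, N - 1`,
so `x (p, a) ↦ x (p + 1, a)` extends to a unitary `U`, and `T_p a b = ⟪x (0, a), Uᵖ x (0, b)⟫`.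
Expanding in an orthonormal eigenbasis `b_k` of `U`, with eigenvalues `e^{iω_k}`, gives
`T_p = ∑ₖ e^{ipω_k} u_k u_k*` with `u_k a = ⟪x (0, a), b_k⟫` and all `λ_k = 1`.
-/

open Matrix ComplexOrder

/-- Block Toeplitz matrix with blocks `T 0, T 1, ..., T N` (conjugate-transposed below
the block diagonal). -/
def blockToeplitz (d N : ℕ) (T : ℕ → Matrix (Fin d) (Fin d) ℂ) :
    Matrix (Fin (N + 1) × Fin d) (Fin (N + 1) × Fin d) ℂ :=
  fun p q =>
    if p.1.1 ≤ q.1.1 then T (q.1.1 - p.1.1) p.2 q.2 else (T (p.1.1 - q.1.1))ᴴ p.2 q.2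

open Module Function
open scoped MatrixOrder

-- `arg` takes values in `(-π, π]`, so `-arg (conj z)` lies in `[-π, π)`.
theorem Complex.exists_mem_Ico_exp_mul_I_eq {z : ℂ} (hz : ‖z‖ = 1) :
    ∃ ω ∈ Set.Ico (-Real.pi) Real.pi, Complex.exp (ω * Complex.I) = z := by
  refine ⟨-Complex.arg (starRingEnd ℂ z), ⟨?_, ?_⟩, ?_⟩
  · linarith [Complex.arg_le_pi (starRingEnd ℂ z)]
  · linarith [Complex.neg_pi_lt_arg (starRingEnd ℂ z)]
  · have h := Complex.norm_mul_exp_arg_mul_I (starRingEnd ℂ z)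
    rw [Complex.norm_conj, hz, Complex.ofReal_one, one_mul] at h
    have h' := congrArg (starRingEnd ℂ) h
    rw [← Complex.exp_conj] at h'
    simpa using h'

theorem Module.End.pow_apply_eq_of_apply_castSucc {R M : Type*} [Semiring R] [AddCommMonoid M]
    [Module R M] {N : ℕ} (U : Module.End R M) {f : Fin (N + 1) → M}
    (h : ∀ p : Fin N, U (f p.castSucc) = f p.succ) (p : Fin (N + 1)) :
    (U ^ (p : ℕ)) (f 0) = f p := by
  induction p using Fin.induction with
  | zero => simp
  | succ p ih => rw [Fin.val_succ, pow_succ', Module.End.mul_apply, ← Fin.val_castSucc, ih, h]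

theorem Matrix.PosSemidef.exists_gram_eq {n 𝕜 : Type*} [Fintype n] [RCLike 𝕜]
    {M : Matrix n n 𝕜} (hM : M.PosSemidef) : ∃ v : n → EuclideanSpace 𝕜 n, gram 𝕜 v = M := by
  classical
  obtain ⟨B, rfl⟩ := CStarAlgebra.nonneg_iff_eq_star_mul_self.mp hM.nonneg
  refine ⟨fun j => WithLp.toLp 2 fun k => B k j, ?_⟩
  ext i j
  simp [gram_apply, PiLp.inner_apply, mul_apply, mul_comm]

section InnerProductSpace

variable {𝕜 E : Type*} [RCLike 𝕜] [NormedAddCommGroup E] [InnerProductSpace 𝕜 E]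

theorem OrthonormalBasis.inner_pow_apply_eq_sum {ι : Type*} [Fintype ι]
    (b : OrthonormalBasis ι 𝕜 E) {T : E →ₗ[𝕜] E} {z : ι → 𝕜} (hT : ∀ k, T (b k) = z k • b k)
    (n : ℕ) (x y : E) :
    inner 𝕜 x ((T ^ n) y) = ∑ k, z k ^ n * inner 𝕜 x (b k) * inner 𝕜 (b k) y := by
  have hpow (k : ι) : (T ^ n) (b k) = z k ^ n • b k :=
    Module.End.HasEigenvector.pow_apply
      ⟨Module.End.mem_eigenspace_iff.mpr (hT k), b.toBasis.ne_zero k⟩ n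
  conv_lhs => rw [← b.sum_repr' y]
  simp only [map_sum, map_smul, hpow, smul_smul, inner_sum, inner_smul_right]
  exact Finset.sum_congr rfl fun k _ => by ring

variable [FiniteDimensional 𝕜 E]

theorem DirectSum.IsInternal.exists_orthonormalBasis_subordinate {ι : Type*} [DecidableEq ι]
    {n : ℕ} (hn : finrank 𝕜 E = n) {V : ι → Submodule 𝕜 E} (hV : DirectSum.IsInternal V)
    (hO : OrthogonalFamily 𝕜 (fun i => V i) fun i => (V i).subtypeₗᵢ) :
    ∃ (b : OrthonormalBasis (Fin n) 𝕜 E) (f : Fin n → ι), ∀ k, b k ∈ V (f k) := by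
  let _ := hV.submodule_iSupIndep.fintypeNeBotOfFiniteDimensional
  have hV' := DirectSum.isInternal_ne_bot_iff.mpr hV
  have hO' := hO.comp (Subtype.val_injective (p := fun i => V i ≠ ⊥))
  exact ⟨hV'.subordinateOrthonormalBasis hn hO',
    fun k => (hV'.subordinateOrthonormalBasisIndex hn k hO').1,
    fun k => hV'.subordinateOrthonormalBasis_subordinate hn k hO'⟩

theorem LinearIsometry.toLinearMap_mem_unitary (U : E →ₗᵢ[𝕜] E) :
    U.toLinearMap ∈ unitary (E →ₗ[𝕜] E) := by
  set e := U.toLinearIsometryEquiv rfl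
  have hstar : star U.toLinearMap = e.symm.toLinearMap := e.adjoint_toLinearMap_eq_symm
  refine Unitary.mem_iff.mpr ⟨?_, ?_⟩ <;> ext x <;> simp only [hstar]
  · exact e.symm_apply_apply x
  · exact e.apply_symm_apply x

theorem LinearMap.exists_linearIsometry_comp_eq {F : Type*} [AddCommGroup F] [Module 𝕜 F]
    {G₀ G₁ : F →ₗ[𝕜] E} (hG₀ : Injective G₀) (h : ∀ x, ‖G₁ x‖ = ‖G₀ x‖) :
    ∃ U : E →ₗᵢ[𝕜] E, ∀ x, U (G₀ x) = G₁ x := by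
  let e := LinearEquiv.ofInjective G₀ hG₀
  let L : LinearMap.range G₀ →ₗᵢ[𝕜] E := ⟨G₁ ∘ₗ e.symm.toLinearMap, fun s => by
    obtain ⟨x, rfl⟩ := e.surjective s
    simpa [e] using h x⟩
  refine ⟨L.extend, fun x => ?_⟩
  simpa [L, e] using L.extend_apply (e x)

theorem exists_linearIsometry_apply_eq_of_gram_eq {ι : Type*} [Fintype ι] {v w : ι → E}
    (hv : LinearIndependent 𝕜 v) (h : gram 𝕜 w = gram 𝕜 v) :
    ∃ U : E →ₗᵢ[𝕜] E, ∀ i, U (v i) = w i := by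
  classical
  obtain ⟨U, hU⟩ := LinearMap.exists_linearIsometry_comp_eq
    (G₁ := Fintype.linearCombination 𝕜 w) hv.fintypeLinearCombination_injective fun c => by
      simp only [Fintype.linearCombination_apply, @norm_eq_sqrt_re_inner 𝕜,
        ← star_dotProduct_gram_mulVec, h]
  exact ⟨U, fun i => by simpa using hU (Pi.single i 1)⟩

end InnerProductSpace

section Complex

variable {E : Type*} [NormedAddCommGroup E] [InnerProductSpace ℂ E] [FiniteDimensional ℂ E]
  {n : ℕ}

-- `T + T⋆` and `I • (T⋆ - T)` are commuting symmetric operators, and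
-- `2 • T = (T + T⋆) + I • (I • (T⋆ - T))`, so their joint eigenvectors diagonalise `T`.
theorem LinearMap.exists_orthonormalBasis_apply_eq_smul_of_isStarNormal
    (hn : finrank ℂ E = n) (T : E →ₗ[ℂ] E) [hT : IsStarNormal T] :
    ∃ (b : OrthonormalBasis (Fin n) ℂ E) (z : Fin n → ℂ), ∀ k, T (b k) = z k • b k := by
  classical
  set A : E →ₗ[ℂ] E := T + star T
  set B : E →ₗ[ℂ] E := Complex.I • (star T - T)
  have hA : A.IsSymmetric := (isSymmetric_iff_isSelfAdjoint A).2 (IsSelfAdjoint.add_star_self T)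
  have hB : B.IsSymmetric := by
    rw [isSymmetric_iff_isSelfAdjoint, IsSelfAdjoint, star_smul, star_sub, star_star]
    simp only [B, RCLike.star_def, Complex.conj_I, neg_smul, ← smul_neg, neg_sub]
  have hAB : Commute A B := by
    have h := hT.star_comm_self
    exact ((h.symm.add_left (Commute.refl _)).sub_right ((Commute.refl T).add_left h)).smul_right _
  have hTAB : (2 : ℂ) • T = A + Complex.I • B := by
    simp only [A, B, smul_smul, Complex.I_mul_I, smul_sub, neg_smul, one_smul]
    module
  obtain ⟨b, μ, hb⟩ := DirectSum.IsInternal.exists_orthonormalBasis_subordinate hn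
    (hA.directSum_isInternal_of_commute hB hAB) (hA.orthogonalFamily_eigenspace_inf_eigenspace hB)
  refine ⟨b, fun k => ((μ k).2 + Complex.I * (μ k).1) / 2, fun k => ?_⟩
  obtain ⟨hAk, hBk⟩ := hb k
  rw [SetLike.mem_coe, Module.End.mem_eigenspace_iff] at hAk hBk
  have h2T := congrArg (· (b k)) hTAB
  simp only [LinearMap.smul_apply, LinearMap.add_apply, hAk, hBk] at h2T
  linear_combination (norm := module) (2⁻¹ : ℂ) • h2T

theorem LinearIsometry.exists_orthonormalBasis_apply_eq_smul (hn : finrank ℂ E = n)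
    (U : E →ₗᵢ[ℂ] E) :
    ∃ (b : OrthonormalBasis (Fin n) ℂ E) (z : Fin n → ℂ),
      (∀ k, ‖z k‖ = 1) ∧ ∀ k, U (b k) = z k • b k := by
  have := isStarNormal_of_mem_unitary U.toLinearMap_mem_unitary
  obtain ⟨b, z, hb⟩ :=
    LinearMap.exists_orthonormalBasis_apply_eq_smul_of_isStarNormal hn U.toLinearMap
  refine ⟨b, z, fun k => ?_, hb⟩
  calc ‖z k‖ = ‖z k • b k‖ := by rw [norm_smul, b.orthonormal.1 k, mul_one]
    _ = 1 := by rw [← hb, LinearIsometry.coe_toLinearMap, U.norm_map, b.orthonormal.1 k]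

end Complex

theorem Matrix.PosDef.exists_linearIsometry_pow_of_shift {𝕜 ι : Type*} [RCLike 𝕜] [Fintype ι]
    {N : ℕ} {M : Matrix (Fin (N + 1) × ι) (Fin (N + 1) × ι) 𝕜} (hM : M.PosDef)
    (hshift : ∀ (p q : Fin N) (a b : ι),
      M (p.succ, a) (q.succ, b) = M (p.castSucc, a) (q.castSucc, b)) :
    ∃ (x : ι → EuclideanSpace 𝕜 (Fin (N + 1) × ι))
      (U : EuclideanSpace 𝕜 (Fin (N + 1) × ι) →ₗᵢ[𝕜] EuclideanSpace 𝕜 (Fin (N + 1) × ι)),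
      ∀ p a b, M (0, a) (p, b) = inner 𝕜 (x a) ((U.toLinearMap ^ (p : ℕ)) (x b)) := by
  obtain ⟨v, hv⟩ := hM.posSemidef.exists_gram_eq
  have hvM (i j) : inner 𝕜 (v i) (v j) = M i j := by rw [← hv, gram_apply]
  have hli : LinearIndependent 𝕜 (v ∘ Prod.map Fin.castSucc id) :=
    (linearIndependent_of_posDef_gram (hv ▸ hM)).comp _
      ((Fin.castSucc_injective N).prodMap injective_id)
  obtain ⟨U, hU⟩ := exists_linearIsometry_apply_eq_of_gram_eq (w := v ∘ Prod.map Fin.succ id)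
    hli (by ext ⟨p, a⟩ ⟨q, b⟩; simp [gram_apply, hvM, hshift])
  refine ⟨fun a => v (0, a), U, fun p a b => ?_⟩
  rw [Module.End.pow_apply_eq_of_apply_castSucc U.toLinearMap (f := fun p => v (p, b))
    (fun p => hU (p, b)), hvM]

theorem blockToeplitz_succ_succ (d N : ℕ) (T : ℕ → Matrix (Fin d) (Fin d) ℂ) (p q : Fin N)
    (a b : Fin d) :
    blockToeplitz d N T (p.succ, a) (q.succ, b) =
      blockToeplitz d N T (p.castSucc, a) (q.castSucc, b) := by
  simp [blockToeplitz, Nat.add_sub_add_right]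

theorem blockToeplitz_zero_left (d N : ℕ) (T : ℕ → Matrix (Fin d) (Fin d) ℂ) (p : Fin (N + 1))
    (a b : Fin d) : blockToeplitz d N T (0, a) (p, b) = T p a b := by
  simp [blockToeplitz]

theorem tismenetsky_decomposition_general (d N : ℕ) (T : ℕ → Matrix (Fin d) (Fin d) ℂ)
    (hpd : (blockToeplitz d N T).PosDef) :
    ∃ (u : Fin (d * (N + 1)) → Fin d → ℂ) (ω : Fin (d * (N + 1)) → ℝ)
      (lam : Fin (d * (N + 1)) → ℝ),
      (∀ k, ω k ∈ Set.Ico (-Real.pi) Real.pi ∧ 0 < lam k) ∧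
      ∀ j ≤ N, T j = ∑ k, ((lam k : ℂ) * Complex.exp (Complex.I * j * ω k)) •
        vecMulVec (u k) (star (u k)) := by
  obtain ⟨x, U, hxU⟩ := hpd.exists_linearIsometry_pow_of_shift (blockToeplitz_succ_succ d N T)
  obtain ⟨b, z, hz, hb⟩ := U.exists_orthonormalBasis_apply_eq_smul (n := d * (N + 1))
    (by simp [mul_comm])
  choose ω hω hωz using fun k => Complex.exists_mem_Ico_exp_mul_I_eq (hz k)
  refine ⟨fun k a => inner ℂ (x a) (b k), ω, fun _ => 1, fun k => ⟨hω k, one_pos⟩,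
    fun j hj => ?_⟩
  ext a c
  rw [← blockToeplitz_zero_left d N T ⟨j, Nat.lt_succ_of_le hj⟩, hxU,
    b.inner_pow_apply_eq_sum hb, Matrix.sum_apply]
  refine Finset.sum_congr rfl fun k _ => ?_
  rw [show Complex.I * j * ω k = j * (ω k * Complex.I) by ring, Complex.exp_nat_mul, hωz k]
  simp [vecMulVec_apply, mul_assoc]

/-- Tismenetsky's decomposition theorem.  If the Hermitian block Toeplitz
matrix `Toeplitz(T₀, ..., T_N)` is positive definite, then there are `d(N+1)` vectors
`u_k ∈ ℂ^d`, angles `ω_k ∈ [−π, π)` and scalars `λ_k > 0` with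
`T_j = Σ_k λ_k u_k u_k* e^{ijω_k}` for `j = 0, ..., N`. -/
theorem tismenetsky_decomposition (d N : ℕ) (T : ℕ → Matrix (Fin d) (Fin d) ℂ)
    (hT0 : (T 0).IsHermitian) (hpd : (blockToeplitz d N T).PosDef) :
    ∃ (u : Fin (d * (N + 1)) → Fin d → ℂ) (ω : Fin (d * (N + 1)) → ℝ)
      (lam : Fin (d * (N + 1)) → ℝ),
      (∀ k, ω k ∈ Set.Ico (-Real.pi) Real.pi ∧ 0 < lam k) ∧
      ∀ j ≤ N, T j = ∑ k, ((lam k : ℂ) * Complex.exp (Complex.I * j * ω k)) •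
        vecMulVec (u k) (star (u k)) :=
  tismenetsky_decomposition_general d N T hpd
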